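/- Let H be a graph obtained as an R-minor of a connected graph G (via an R-net N and R-partition 𝒫), with R ≥ c. If f : V(G)\Y → ℝ is a non-contracting embedding with expansion at most c, and C is a cycle in H all of whose vertices have clusters disjoint from Y, then a contradiction arises; specifically, there exist adjacent net points u, v on C and vertices u', v' on a path joining them inside 𝒫(u) ∪ 𝒫(v), and a net point w on C, with |f(u')−f(v')| ≥ d_G(u',w) + d_G(w,v') > R ≥ c, contradicting that f has expansion at most c since u', v' are adjacent in G. -/

import Mathlib

/-!
Take a net point `w` of `C` whose value under `f` lies between the values at two other net
points of `C`. Removing `w` from `C` leaves a path joining those two, so some edge `uv` of `H`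
on it straddles `f w`; a walk from `u` to `v` inside the clusters of `u` and `v` then has an edge
`u'v'` of `G` straddling `f w` as well. Each vertex of these two clusters is at least as close to
its own centre as to `w`, which is more than `R` away from that centre, so it lies at distance
more than `R / 2` from `w`. As `f` does not contract, `f v' - f u' > R ≥ c`, which contradicts
the expansion bound on the edge `u'v'`.
-/

/-- The `R`-minor of `G` induced by a Voronoi partition. -/
def voronoiMinor {V : Type*} (G : SimpleGraph V) (N : Set V) (center : V → V) :
    SimpleGraph N where
  Adj u v := u ≠ v ∧ ∃ a b : V, G.Adj a b ∧ center a = ↑u ∧ center b = ↑v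
  symm := by
    constructor
    rintro u v ⟨h, a, b, hab, ha, hb⟩
    exact ⟨h.symm, b, a, hab.symm, hb, ha⟩
  loopless := by constructor; rintro u ⟨h, -⟩; exact h rfl

open SimpleGraph

theorem Finset.exists_le_le_of_two_lt_card {α β : Type*} [LinearOrder β] {s : Finset α}
    (hs : 2 < s.card) (g : α → β) :
    ∃ m ∈ s, ∃ w ∈ s, ∃ M ∈ s, m ≠ w ∧ w ≠ M ∧ m ≠ M ∧ g m ≤ g w ∧ g w ≤ g M := by
  classical
  obtain ⟨m, hm, hmin⟩ := s.exists_min_image g (Finset.card_pos.mp (by omega))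
  have hs' : 1 < (s.erase m).card := by rw [Finset.card_erase_of_mem hm]; omega
  obtain ⟨M, hM, hmax⟩ := (s.erase m).exists_max_image g (Finset.card_pos.mp (by omega))
  obtain ⟨w, hw⟩ : ((s.erase m).erase M).Nonempty := by
    rw [← Finset.card_pos, Finset.card_erase_of_mem hM]; omega
  obtain ⟨hwM, hw⟩ := Finset.mem_erase.mp hw
  obtain ⟨hwm, hw⟩ := Finset.mem_erase.mp hw
  obtain ⟨hMm, hM'⟩ := Finset.mem_erase.mp hM
  exact ⟨m, hm, w, hw, M, hM', hwm.symm, hwM, hMm.symm, hmin w hw,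
    hmax w (Finset.mem_erase.mpr ⟨hwm, hw⟩)⟩

namespace SimpleGraph

variable {V : Type*} {G : SimpleGraph V}

theorem Reachable.dist_map_le {W : Type*} {G' : SimpleGraph W} (φ : G →g G') {u v : V}
    (h : G.Reachable u v) : G'.dist (φ u) (φ v) ≤ G.dist u v := by
  obtain ⟨p, hp⟩ := h.exists_walk_length_eq_dist
  exact hp ▸ p.length_map φ ▸ dist_le (p.map φ)

theorem Connected.dist_le_two_mul_dist (hG : G.Connected) {y z w : V}
    (h : G.dist z y ≤ G.dist z w) : G.dist y w ≤ 2 * G.dist z w := by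
  have := hG.dist_triangle (u := y) (v := z) (w := w)
  have := dist_comm (G := G) (u := y) (v := z)
  omega

theorem Reachable.exists_walk_of_induce {s : Set V} {x y : s} (h : (G.induce s).Reachable x y) :
    ∃ q : G.Walk x y, ∀ z ∈ q.support, z ∈ s := by
  obtain ⟨p⟩ := h
  refine ⟨p.map (Embedding.induce s).toHom, fun z hz => ?_⟩
  obtain ⟨z, -, rfl⟩ := List.mem_map.mp ((p.support_map _) ▸ hz)
  exact z.2

namespace Walk

theorem exists_mem_darts_le_le {β : Type*} [LinearOrder β] (g : V → β) {t : β} {x y : V}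
    (p : G.Walk x y) (hxy : x ≠ y) (hx : g x ≤ t) (hy : t ≤ g y) :
    ∃ d ∈ p.darts, g d.fst ≤ t ∧ t ≤ g d.snd := by
  induction p with
  | nil => exact absurd rfl hxy
  | @cons x m y h p ih =>
    by_cases hm : t ≤ g m
    · exact ⟨⟨(x, m), h⟩, by simp, hx, hm⟩
    · have hmy : m ≠ y := by rintro rfl; exact hm hy
      obtain ⟨d, hd, hd'⟩ := ih hmy (le_of_not_ge hm) hy
      exact ⟨d, by simp [hd], hd'⟩

theorem exists_walk_support_subset {u v x y : V} (p : G.Walk u v) (hx : x ∈ p.support)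
    (hy : y ∈ p.support) : ∃ q : G.Walk x y, q.support ⊆ p.support := by
  classical
  refine ⟨(p.takeUntil x hx).reverse.append (p.takeUntil y hy), fun z hz => ?_⟩
  rw [mem_support_append_iff, support_reverse, List.mem_reverse] at hz
  exact hz.elim (p.support_takeUntil_subset_support hx ·)
    (p.support_takeUntil_subset_support hy ·)

theorem IsCycle.exists_walk_not_mem_support {u w x y : V} {c : G.Walk u u} (hc : c.IsCycle)
    (hw : w ∈ c.support) (hx : x ∈ c.support) (hy : y ∈ c.support) (hxw : x ≠ w)
    (hyw : y ≠ w) : ∃ q : G.Walk x y, w ∉ q.support ∧ q.support ⊆ c.support := by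
  classical
  suffices ∀ c : G.Walk w w, c.IsCycle → x ∈ c.support → y ∈ c.support →
      ∃ q : G.Walk x y, w ∉ q.support ∧ q.support ⊆ c.support by
    obtain ⟨q, hqw, hq⟩ := this (c.rotate w hw) (hc.rotate hw)
      ((mem_support_rotate_iff ..).mpr hx) ((mem_support_rotate_iff ..).mpr hy)
    exact ⟨q, hqw, fun z hz => (mem_support_rotate_iff ..).mp (hq hz)⟩
  rintro (_ | ⟨h, p⟩) hc hx hy
  · exact absurd hc not_isCycle_nil
  have hp : p.IsPath := ((cons_isCycle_iff p h).mp hc).1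
  rw [support_cons, List.mem_cons] at hx hy
  replace hx := hx.resolve_left hxw
  replace hy := hy.resolve_left hyw
  refine ⟨(p.takeUntil x hx).reverse.append (p.takeUntil y hy), ?_, fun z hz => ?_⟩
  · rw [mem_support_append_iff, support_reverse, List.mem_reverse]
    exact not_or_intro (p.endpoint_notMem_support_takeUntil hp hx hxw.symm)
      (p.endpoint_notMem_support_takeUntil hp hy hyw.symm)
  · rw [mem_support_append_iff, support_reverse, List.mem_reverse] at hz
    exact List.mem_cons_of_mem _ (hz.elim (p.support_takeUntil_subset_support hx ·)
      (p.support_takeUntil_subset_support hy ·))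

theorem dist_le_abs_sub {s : Set V} {F : V → ℝ}
    (hF : ∀ x y : s, (G.induce s).Reachable x y → ((G.induce s).dist x y : ℝ) ≤ |F x - F y|)
    {x y : V} (q : G.Walk x y) (hq : ∀ z ∈ q.support, z ∈ s) : (G.dist x y : ℝ) ≤ |F x - F y| :=
  have hr : (G.induce s).Reachable ⟨x, hq x q.start_mem_support⟩ ⟨y, hq y q.end_mem_support⟩ :=
    ⟨q.induce s hq⟩
  le_trans (mod_cast hr.dist_map_le (Embedding.induce s).toHom) (hF _ _ hr)

theorem IsCycle.two_lt_card_support_toFinset [DecidableEq V] {u : V} {c : G.Walk u u}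
    (hc : c.IsCycle) : 2 < c.support.toFinset.card := by
  have hlen : c.support.tail.length = c.length := by simp [c.length_support]
  calc 2 < c.support.tail.toFinset.card := by
        rw [List.toFinset_card_of_nodup hc.support_nodup, hlen]; exact hc.three_le_length
    _ ≤ c.support.toFinset.card := by
        refine Finset.card_le_card fun z hz => ?_
        rw [List.mem_toFinset] at hz ⊢
        exact List.mem_of_mem_tail hz

theorem IsCycle.exists_adj_le_le {β : Type*} [LinearOrder β] {u : V} {c : G.Walk u u}
    (hc : c.IsCycle) (g : V → β) :
    ∃ x ∈ c.support, ∃ y ∈ c.support, ∃ w ∈ c.support,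
      G.Adj x y ∧ x ≠ w ∧ y ≠ w ∧ g x ≤ g w ∧ g w ≤ g y := by
  classical
  obtain ⟨m, hm, w, hw, M, hM, hmw, hwM, hmM, hmw', hwM'⟩ :=
    Finset.exists_le_le_of_two_lt_card hc.two_lt_card_support_toFinset g
  rw [List.mem_toFinset] at hm hw hM
  obtain ⟨p, hpw, hp⟩ := hc.exists_walk_not_mem_support hw hm hM hmw hwM.symm
  obtain ⟨d, hd, hd'⟩ := p.exists_mem_darts_le_le g hmM hmw' hwM'
  have hfst := p.dart_fst_mem_support_of_mem_darts hd
  have hsnd := p.dart_snd_mem_support_of_mem_darts hd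
  exact ⟨d.fst, hp hfst, d.snd, hp hsnd, w, hw, d.adj, ne_of_mem_of_not_mem hfst hpw,
    ne_of_mem_of_not_mem hsnd hpw, hd'⟩

end Walk
end SimpleGraph

namespace voronoiMinor

variable {V : Type*} {G : SimpleGraph V} {N : Set V} {center : V → V}

theorem exists_walk_of_adj (hfix : ∀ y ∈ N, center y = y)
    (hconn : ∀ y ∈ N, (G.induce {v | center v = y}).Connected) {u v : N}
    (huv : (voronoiMinor G N center).Adj u v) :
    ∃ q : G.Walk u v, ∀ x ∈ q.support, center x = u ∨ center x = v := by
  obtain ⟨-, a, b, hab, ha, hb⟩ := huv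
  obtain ⟨p, hp⟩ :=
    ((hconn u u.2).preconnected ⟨u, hfix u u.2⟩ ⟨a, ha⟩).exists_walk_of_induce
  obtain ⟨q, hq⟩ :=
    ((hconn v v.2).preconnected ⟨b, hb⟩ ⟨v, hfix v v.2⟩).exists_walk_of_induce
  refine ⟨p.append (q.cons hab), fun x hx => ?_⟩
  rw [Walk.mem_support_append_iff, Walk.support_cons, List.mem_cons] at hx
  rcases hx with hx | hx | hx
  exacts [.inl (hp x hx), .inl (hx ▸ ha), .inr (hq x hx)]

theorem exists_walk_of_walk (hfix : ∀ y ∈ N, center y = y)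
    (hconn : ∀ y ∈ N, (G.induce {v | center v = y}).Connected) {y z : N}
    (p : (voronoiMinor G N center).Walk y z) :
    ∃ q : G.Walk y z, ∀ x ∈ q.support, ∃ n ∈ p.support, center x = n := by
  induction p with
  | @nil y => exact ⟨.nil, by simp [hfix y y.2]⟩
  | @cons u v z huv p ih =>
    obtain ⟨q₁, hq₁⟩ := exists_walk_of_adj hfix hconn huv
    obtain ⟨q₂, hq₂⟩ := ih
    refine ⟨q₁.append q₂, fun x hx => ?_⟩
    rw [Walk.mem_support_append_iff] at hx
    rcases hx with hx | hx
    · rcases hq₁ x hx with h | h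
      exacts [⟨u, by simp, h⟩, ⟨v, by simp, h⟩]
    · obtain ⟨n, hn, h⟩ := hq₂ x hx
      exact ⟨n, by simp [hn], h⟩

theorem exists_walk_of_center_mem (hfix : ∀ y ∈ N, center y = y)
    (hconn : ∀ y ∈ N, (G.induce {v | center v = y}).Connected) {y z : N}
    (p : (voronoiMinor G N center).Walk y z) {x : V} {n m : N} (hn : n ∈ p.support)
    (hxn : center x = n) (hm : m ∈ p.support) :
    ∃ q : G.Walk x m, ∀ x' ∈ q.support, ∃ n' ∈ p.support, center x' = n' := by
  obtain ⟨q₁, hq₁⟩ :=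
    ((hconn n n.2).preconnected ⟨x, hxn⟩ ⟨n, hfix n n.2⟩).exists_walk_of_induce
  obtain ⟨p', hp'⟩ := p.exists_walk_support_subset hn hm
  obtain ⟨q₂, hq₂⟩ := exists_walk_of_walk hfix hconn p'
  refine ⟨q₁.append q₂, fun x' hx' => ?_⟩
  rw [Walk.mem_support_append_iff] at hx'
  rcases hx' with hx' | hx'
  · exact ⟨n, hn, hq₁ x' hx'⟩
  · obtain ⟨n', hn', h⟩ := hq₂ x' hx'
    exact ⟨n', hp' hn', h⟩

end voronoiMinor

theorem minor_cycle_contradiction_general {V : Type*}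
    (G : SimpleGraph V) (hG : G.Connected) (c : ℝ)
    (R : ℕ) (hcR : c ≤ R)
    (N : Set V) (center : V → V)
    (hsep : ∀ u ∈ N, ∀ v ∈ N, u ≠ v → R < G.dist u v)
    (hfix : ∀ y ∈ N, center y = y)
    (hnear : ∀ v : V, ∀ y ∈ N, G.dist v (center v) ≤ G.dist v y)
    (hconn : ∀ y ∈ N, (G.induce {v : V | center v = y}).Connected)
    (Y : Set V)
    (f : {v : V // v ∉ Y} → ℝ)
    (hnc : ∀ x y : {v : V // v ∉ Y},
      (G.induce {v : V | v ∉ Y}).Reachable x y →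
        ((G.induce {v : V | v ∉ Y}).dist x y : ℝ) ≤ |f x - f y|)
    (hexp : ∀ x y : {v : V // v ∉ Y},
      (G.induce {v : V | v ∉ Y}).Reachable x y →
        |f x - f y| ≤ c * (G.induce {v : V | v ∉ Y}).dist x y)
    (a : N) (C : (voronoiMinor G N center).Walk a a) (hC : C.IsCycle)
    (hdisj : ∀ w ∈ C.support, ∀ x : V, center x = (w : V) → x ∉ Y) :
    False := by
  classical
  let F : V → ℝ := fun x => if hx : x ∈ Y then 0 else f ⟨x, hx⟩
  have hF (x : {v : V // v ∉ Y}) : F x = f x := dif_neg x.2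
  simp only [← hF] at hnc hexp
  obtain ⟨u, hu, v, hv, w, hw, huv, huw, hvw, hFuw, hFwv⟩ := hC.exists_adj_le_le (F ∘ (↑))
  simp only [Function.comp_apply] at hFuw hFwv
  obtain ⟨Q, hQ⟩ := voronoiMinor.exists_walk_of_adj hfix hconn huv
  obtain ⟨d, hd, hdw, hwd⟩ :=
    Q.exists_mem_darts_le_le F (Subtype.coe_ne_coe.mpr huv.ne) hFuw hFwv
  have hQC (x : V) (hx : x ∈ Q.support) : ∃ n ∈ C.support, n ≠ w ∧ center x = n := by
    rcases hQ x hx with h | h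
    exacts [⟨u, hu, huw, h⟩, ⟨v, hv, hvw, h⟩]
  have far (x : V) (hx : x ∈ Q.support) : (R : ℝ) < 2 * |F x - F w| := by
    obtain ⟨n, hn, hnw, hxn⟩ := hQC x hx
    have hR : R < 2 * G.dist x w := (hsep n n.2 w w.2 (Subtype.coe_ne_coe.mpr hnw)).trans_le
      (hG.dist_le_two_mul_dist (hxn ▸ hnear x w w.2))
    obtain ⟨q, hq⟩ := voronoiMinor.exists_walk_of_center_mem hfix hconn C hn hxn hw
    have := q.dist_le_abs_sub hnc fun z hz => have ⟨n, hn, h⟩ := hq z hz; hdisj n hn z h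
    exact (Nat.cast_lt.mpr hR).trans_le (by push_cast; linarith)
  have edge : |F d.fst - F d.snd| ≤ c := by
    obtain ⟨n₁, hn₁, -, h₁⟩ := hQC _ (Q.dart_fst_mem_support_of_mem_darts hd)
    obtain ⟨n₂, hn₂, -, h₂⟩ := hQC _ (Q.dart_snd_mem_support_of_mem_darts hd)
    have hadj : (G.induce {v : V | v ∉ Y}).Adj ⟨_, hdisj n₁ hn₁ _ h₁⟩ ⟨_, hdisj n₂ hn₂ _ h₂⟩ :=
      d.adj
    simpa [dist_eq_one_iff_adj.mpr hadj] using hexp _ _ hadj.reachable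
  have h₁ := far _ (Q.dart_fst_mem_support_of_mem_darts hd)
  have h₂ := far _ (Q.dart_snd_mem_support_of_mem_darts hd)
  rw [abs_of_nonpos (by linarith)] at h₁
  rw [abs_of_nonneg (by linarith)] at h₂
  linarith [neg_abs_le (F d.fst - F d.snd)]

/-- Let `H` be an `R`-minor of a connected graph `G` (via an
`R`-net `N` and `R`-partition given by `center`), with `R ≥ c ≥ 1`. Suppose
`f : V(G) \ Y → ℝ` is a non-contracting embedding with expansion at most `c`
(w.r.t. the shortest-path metric of `G \ Y`), and suppose `C` is a cycle in `H`
all of whose vertices have Voronoi clusters disjoint from `Y`. Then a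
contradiction arises. -/
theorem minor_cycle_contradiction {V : Type*} [Fintype V]
    (G : SimpleGraph V) (hG : G.Connected) (c : ℝ) (hc : 1 ≤ c)
    (R : ℕ) (hcR : c ≤ R)
    (N : Set V) (center : V → V)
    (hsep : ∀ u ∈ N, ∀ v ∈ N, u ≠ v → R < G.dist u v)
    (hcov : ∀ v : V, ∃ y ∈ N, G.dist v y ≤ R)
    (hcen : ∀ v : V, center v ∈ N)
    (hfix : ∀ y ∈ N, center y = y)
    (hnear : ∀ v : V, ∀ y ∈ N, G.dist v (center v) ≤ G.dist v y)
    (hrad : ∀ v : V, G.dist v (center v) ≤ R)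
    (hconn : ∀ y ∈ N, (G.induce {v : V | center v = y}).Connected)
    (Y : Set V)
    (f : {v : V // v ∉ Y} → ℝ)
    (hnc : ∀ x y : {v : V // v ∉ Y},
      (G.induce {v : V | v ∉ Y}).Reachable x y →
        ((G.induce {v : V | v ∉ Y}).dist x y : ℝ) ≤ |f x - f y|)
    (hexp : ∀ x y : {v : V // v ∉ Y},
      (G.induce {v : V | v ∉ Y}).Reachable x y →
        |f x - f y| ≤ c * (G.induce {v : V | v ∉ Y}).dist x y)
    (a : N) (C : (voronoiMinor G N center).Walk a a) (hC : C.IsCycle)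
    (hdisj : ∀ w ∈ C.support, ∀ x : V, center x = (w : V) → x ∉ Y) :
    False :=
  minor_cycle_contradiction_general G hG c R hcR N center hsep hfix hnear hconn Y f hnc hexp a C hC
    hdisj
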